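/- Let (C, e) be a canonical extension of a bounded distributive lattice A, and let f : C → C be a monotone, closed Esakia map such that f(e a) is closed in C for every a ∈ A. Then for every completely meet-prime element m of C, ■_f(m) = sSup { e a | a ∈ A, f(e a) ≤ m }. In particular ■_f(m) is an open element of C. (Identity (14) established in the proof of Proposition 3.6.) -/

import Mathlib

/-- An element is completely join-prime. -/
def CJPrime {C : Type*} [CompleteLattice C] (j : C) : Prop :=
  j ≠ ⊥ ∧ ∀ S : Set C, j ≤ sSup S → ∃ s ∈ S, j ≤ s

/-- An element is completely meet-prime. -/
def CMPrime {C : Type*} [CompleteLattice C] (m : C) : Prop :=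
  m ≠ ⊤ ∧ ∀ S : Set C, sInf S ≤ m → ∃ s ∈ S, s ≤ m

/-- ◇_f(u) = ⋁ { f j | j completely join-prime, j ≤ u }. -/
def diam {C D : Type*} [CompleteLattice C] [CompleteLattice D]
    (f : C → D) (u : C) : D :=
  sSup (f '' {j | CJPrime j ∧ j ≤ u})

/-- ■_f(v) = ⋁ { j | j completely join-prime, f j ≤ v }. -/
def bsq {C D : Type*} [CompleteLattice C] [CompleteLattice D]
    (f : C → D) (v : D) : C :=
  sSup {j | CJPrime j ∧ f j ≤ v}

/-- □_g(u) = ⋀ { g m | m completely meet-prime, u ≤ m }. -/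
def boxg {C D : Type*} [CompleteLattice C] [CompleteLattice D]
    (g : C → D) (u : C) : D :=
  sInf (g '' {m | CMPrime m ∧ u ≤ m})

/-- ◆_g(v) = ⋀ { m | m completely meet-prime, v ≤ g m }. -/
def bdiam {C D : Type*} [CompleteLattice C] [CompleteLattice D]
    (g : C → D) (v : D) : C :=
  sInf {m | CMPrime m ∧ v ≤ g m}

/-- Every element is the sup of the completely join-primes below it. -/
def JoinPerfect (C : Type*) [CompleteLattice C] : Prop :=
  ∀ u : C, u = sSup {j | CJPrime j ∧ j ≤ u}

/-- Every element is the inf of the completely meet-primes above it. -/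
def MeetPerfect (C : Type*) [CompleteLattice C] : Prop :=
  ∀ u : C, u = sInf {m | CMPrime m ∧ u ≤ m}

/-- `(C, e)` is a canonical extension of the bounded distributive lattice `A`. -/
structure IsCanonicalExtension {A C : Type*} [DistribLattice A] [BoundedOrder A]
    [CompleteLattice C] (e : A → C) : Prop where
  injective : Function.Injective e
  map_bot : e ⊥ = ⊥
  map_top : e ⊤ = ⊤
  map_inf : ∀ a b : A, e (a ⊓ b) = e a ⊓ e b
  map_sup : ∀ a b : A, e (a ⊔ b) = e a ⊔ e b
  dense_joinOfMeets : ∀ u : C, ∃ 𝒮 : Set (Set A),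
      u = sSup ((fun S => sInf (e '' S)) '' 𝒮)
  dense_meetOfJoins : ∀ u : C, ∃ 𝒮 : Set (Set A),
      u = sInf ((fun S => sSup (e '' S)) '' 𝒮)
  compact : ∀ S T : Set A, sInf (e '' S) ≤ sSup (e '' T) →
      ∃ F : Finset A, ↑F ⊆ S ∧ ∃ G : Finset A, ↑G ⊆ T ∧ F.inf id ≤ G.sup id

/-- Closed elements of the canonical extension: meets of subsets of `e(A)`. -/
def ClosedElem {A C : Type*} [CompleteLattice C] (e : A → C) (x : C) : Prop :=
  ∃ S : Set A, x = sInf (e '' S)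

/-- Open elements of the canonical extension: joins of subsets of `e(A)`. -/
def OpenElem {A C : Type*} [CompleteLattice C] (e : A → C) (x : C) : Prop :=
  ∃ S : Set A, x = sSup (e '' S)

/-- Nonempty downward-directed family. -/
def DownDir {C : Type*} [Preorder C] (𝒞 : Set C) : Prop :=
  𝒞.Nonempty ∧ ∀ x ∈ 𝒞, ∀ y ∈ 𝒞, ∃ z ∈ 𝒞, z ≤ x ∧ z ≤ y

/-- Nonempty upward-directed family. -/
def UpDir {C : Type*} [Preorder C] (𝒪 : Set C) : Prop :=
  𝒪.Nonempty ∧ ∀ x ∈ 𝒪, ∀ y ∈ 𝒪, ∃ z ∈ 𝒪, x ≤ z ∧ y ≤ z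

/-- `h` preserves down-directed meets of closed elements. -/
def ClosedEsakia {A C D : Type*} [CompleteLattice C] [CompleteLattice D]
    (e : A → C) (h : C → D) : Prop :=
  ∀ 𝒞 : Set C, DownDir 𝒞 → (∀ c ∈ 𝒞, ClosedElem e c) →
    h (sInf 𝒞) = sInf (h '' 𝒞)

/-- `h` preserves up-directed joins of open elements. -/
def OpenEsakia {A C D : Type*} [CompleteLattice C] [CompleteLattice D]
    (e : A → C) (h : C → D) : Prop :=
  ∀ 𝒪 : Set C, UpDir 𝒪 → (∀ o ∈ 𝒪, OpenElem e o) →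
    h (sSup 𝒪) = sSup (h '' 𝒪)


/-!
The completely join-primes of `C` are closed, so a join-prime `j` with `f j ≤ m` is the
down-directed meet of the `e b` above it; as `f` is closed Esakia, `f j` is the meet of the
`f (e b)`, and meet-primeness of `m` yields one `b` with `j ≤ e b` and `f (e b) ≤ m`.
Conversely, `e a` is the join of the completely join-primes below it: for a prime ideal `J`
of `A`, compactness makes `⋀ e(A ∖ J)` completely join-prime, and the prime ideal theorem
supplies enough such `J`. Monotonicity of `f` then puts every `e a` with `f (e a) ≤ m`
below `■_f m`.
-/

namespace Order.Ideal.IsPrime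

variable {P : Type*} [SemilatticeInf P] [OrderTop P] {J : Order.Ideal P}

lemma finsetInf_notMem (hJ : J.IsPrime) {F : Finset P} (hF : ∀ a ∈ F, a ∉ J) :
    F.inf id ∉ J :=
  Finset.inf_induction (p := (· ∉ J)) hJ.top_notMem
    (fun _ ha _ hb hab => (hJ.mem_or_mem hab).elim ha hb) hF

end Order.Ideal.IsPrime

namespace IsCanonicalExtension

variable {A C : Type*} [DistribLattice A] [BoundedOrder A] [CompleteLattice C] {e : A → C}

protected lemma monotone (hce : IsCanonicalExtension e) : Monotone e := fun a b hab => by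
  rw [← inf_eq_left.mpr hab, hce.map_inf]
  exact inf_le_right

lemma isIdeal_setOf_le (hce : IsCanonicalExtension e) (v : C) :
    Order.IsIdeal {b : A | e b ≤ v} where
  IsLowerSet _ _ hab hb := (hce.monotone hab).trans hb
  Nonempty := ⟨⊥, by simp [hce.map_bot]⟩
  Directed b hb c hc :=
    ⟨b ⊔ c, (hce.map_sup b c).trans_le (sup_le hb hc), le_sup_left, le_sup_right⟩

lemma exists_notMem_of_sInf_compl_le_sSup (hce : IsCanonicalExtension e)
    {J : Order.Ideal A} (hJ : J.IsPrime) {T : Set A}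
    (h : sInf (e '' (J : Set A)ᶜ) ≤ sSup (e '' T)) : ∃ t ∈ T, t ∉ J := by
  obtain ⟨F, hFJ, G, hGT, hFG⟩ := hce.compact _ _ h
  have hG : G.sup id ∉ J := fun hG => hJ.finsetInf_notMem hFJ (J.lower hFG hG)
  obtain ⟨t, htG, htJ⟩ := not_forall₂.mp (mt J.finsetSup_mem_iff.mpr hG)
  exact ⟨t, hGT htG, htJ⟩

/-- The closed element `⋀ e(A ∖ J)` corresponds to the point `J` of the dual space of `A`. -/
lemma cjPrime_sInf_compl (hce : IsCanonicalExtension e) {J : Order.Ideal A}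
    (hJ : J.IsPrime) : CJPrime (sInf (e '' (J : Set A)ᶜ)) := by
  refine ⟨fun hp => ?_, fun S hS => ?_⟩
  · obtain ⟨_, ht, -⟩ := hce.exists_notMem_of_sInf_compl_le_sSup hJ
      (T := ∅) (by rw [hp]; exact bot_le)
    exact ht
  by_contra! hpS
  -- a closed `⋀ e(U)` not above `⋀ e(A ∖ J)` has `U ∩ J ≠ ∅`
  have hSJ : sSup S ≤ sSup (e '' J) := by
    refine sSup_le fun s hs => ?_
    obtain ⟨𝒮, rfl⟩ := hce.dense_joinOfMeets s
    refine sSup_le ?_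
    rintro _ ⟨U, hU, rfl⟩
    have hUJ : ∃ b ∈ U, b ∈ J := by
      by_contra! hU'
      refine hpS _ hs (le_trans (le_sInf ?_) (le_sSup (Set.mem_image_of_mem _ hU)))
      rintro _ ⟨b, hb, rfl⟩
      exact sInf_le ⟨b, hU' b hb, rfl⟩
    obtain ⟨b, hbU, hbJ⟩ := hUJ
    exact (sInf_le (Set.mem_image_of_mem e hbU)).trans
      (le_sSup (Set.mem_image_of_mem e (SetLike.mem_coe.mpr hbJ)))
  obtain ⟨t, htJ, htJ'⟩ := hce.exists_notMem_of_sInf_compl_le_sSup hJ (hS.trans hSJ)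
  exact htJ' htJ

lemma exists_cjPrime_le_of_not_le (hce : IsCanonicalExtension e) {a : A} {v : C}
    (hav : ¬ e a ≤ v) : ∃ j : C, CJPrime j ∧ j ≤ e a ∧ ¬ j ≤ v := by
  obtain ⟨𝒮, rfl⟩ := hce.dense_meetOfJoins v
  obtain ⟨T, hT, haT⟩ : ∃ T ∈ 𝒮, ¬ e a ≤ sSup (e '' T) := by
    by_contra! h
    exact hav (le_sInf (by rintro _ ⟨T, hT, rfl⟩; exact h T hT))
  let I := (hce.isIdeal_setOf_le (sSup (e '' T))).toIdeal
  have hdisj : Disjoint (Order.PFilter.principal a : Set A) I :=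
    Set.disjoint_left.mpr fun _ hac hc => haT ((hce.monotone hac).trans hc)
  obtain ⟨J, hJ, hIJ, hJa⟩ := DistribLattice.prime_ideal_of_disjoint_filter_ideal hdisj
  have haJ : a ∉ J := Set.disjoint_left.mp hJa (Order.PFilter.mem_principal.mpr le_rfl)
  refine ⟨_, hce.cjPrime_sInf_compl hJ, sInf_le ⟨a, haJ, rfl⟩, fun hle => ?_⟩
  obtain ⟨t, htT, htJ⟩ := hce.exists_notMem_of_sInf_compl_le_sSup hJ
    (hle.trans (sInf_le ⟨T, hT, rfl⟩))
  exact htJ (hIJ (le_sSup ⟨t, htT, rfl⟩ : e t ≤ sSup (e '' T)))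

lemma closedElem_of_cjPrime (hce : IsCanonicalExtension e) {j : C} (hj : CJPrime j) :
    ClosedElem e j := by
  obtain ⟨𝒮, h𝒮⟩ := hce.dense_joinOfMeets j
  obtain ⟨_, ⟨S, hS, rfl⟩, hjS⟩ := hj.2 _ h𝒮.le
  exact ⟨S, hjS.antisymm (h𝒮 ▸ le_sSup ⟨S, hS, rfl⟩)⟩

lemma downDir_image_setOf_le (hce : IsCanonicalExtension e) (x : C) :
    DownDir (e '' {b : A | x ≤ e b}) := by
  refine ⟨⟨e ⊤, ⊤, by simp [hce.map_top], rfl⟩, ?_⟩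
  rintro _ ⟨b, hb, rfl⟩ _ ⟨c, hc, rfl⟩
  refine ⟨e (b ⊓ c), ⟨b ⊓ c, ?_, rfl⟩, ?_⟩ <;>
    simp_all [hce.map_inf]

end IsCanonicalExtension

lemma ClosedElem.eq_sInf_image_setOf_le {A C : Type*} [CompleteLattice C] {e : A → C}
    {x : C} (hx : ClosedElem e x) : x = sInf (e '' {b : A | x ≤ e b}) := by
  obtain ⟨S, rfl⟩ := hx
  refine le_antisymm (le_sInf ?_) (sInf_le_sInf (Set.image_mono fun b hb => ?_))
  · rintro _ ⟨b, hb, rfl⟩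
    exact hb
  · exact sInf_le ⟨b, hb, rfl⟩

lemma ClosedEsakia.exists_le_of_apply_le {A C D : Type*} [DistribLattice A] [BoundedOrder A]
    [CompleteLattice C] [CompleteLattice D] {e : A → C} {f : C → D}
    (hce : IsCanonicalExtension e) (hf : ClosedEsakia e f) {x : C} (hx : ClosedElem e x)
    {m : D} (hm : CMPrime m) (hxm : f x ≤ m) : ∃ b : A, x ≤ e b ∧ f (e b) ≤ m := by
  have hfx : f x = sInf (f '' (e '' {b : A | x ≤ e b})) := by
    conv_lhs => rw [hx.eq_sInf_image_setOf_le]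
    exact hf _ (hce.downDir_image_setOf_le x) (by rintro _ ⟨b, -, rfl⟩; exact ⟨{b}, by simp⟩)
  obtain ⟨_, ⟨_, ⟨b, hb, rfl⟩, rfl⟩, hbm⟩ := hm.2 _ (hfx ▸ hxm)
  exact ⟨b, hb, hbm⟩

section Box

variable {A C D : Type*} [DistribLattice A] [BoundedOrder A] [CompleteLattice C]
  [CompleteLattice D] {e : A → C} {f : C → D}

lemma bsq_le_sSup_image (hce : IsCanonicalExtension e) (hf : ClosedEsakia e f) {m : D}
    (hm : CMPrime m) : bsq f m ≤ sSup (e '' {a : A | f (e a) ≤ m}) := by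
  refine sSup_le fun j ⟨hj, hjm⟩ => ?_
  obtain ⟨b, hjb, hbm⟩ := hf.exists_le_of_apply_le hce (hce.closedElem_of_cjPrime hj) hm hjm
  exact hjb.trans (le_sSup ⟨b, hbm, rfl⟩)

lemma sSup_image_le_bsq (hce : IsCanonicalExtension e) (hf : Monotone f) (v : D) :
    sSup (e '' {a : A | f (e a) ≤ v}) ≤ bsq f v := by
  refine sSup_le ?_
  rintro _ ⟨a, ha, rfl⟩
  by_contra hav
  obtain ⟨j, hj, hja, hjv⟩ := hce.exists_cjPrime_le_of_not_le hav
  exact hjv (le_sSup ⟨hj, (hf hja).trans ha⟩)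

end Box

theorem stmt16_general {A C : Type*} [DistribLattice A] [BoundedOrder A] [CompleteLattice C]
    (e : A → C) (hce : IsCanonicalExtension e)
    (f : C → C) (hf : Monotone f) (hfcE : ClosedEsakia e f) :
    ∀ m : C, CMPrime m →
      bsq f m = sSup (e '' {a : A | f (e a) ≤ m}) ∧ OpenElem e (bsq f m) := by
  intro m hm
  have key := (bsq_le_sSup_image hce hfcE hm).antisymm (sSup_image_le_bsq hce hf m)
  exact ⟨key, _, key⟩

/-- Identity (14) from the proof of Proposition 3.6: for every completely
meet-prime `m`, `■_f m = ⋁ { e a | a ∈ A, f (e a) ≤ m }`; in particular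
`■_f m` is an open element. -/
theorem stmt16 {A C : Type*} [DistribLattice A] [BoundedOrder A] [CompleteLattice C]
    (e : A → C) (hce : IsCanonicalExtension e)
    (f : C → C) (hf : Monotone f) (hfcE : ClosedEsakia e f)
    (hcl : ∀ a : A, ClosedElem e (f (e a))) :
    ∀ m : C, CMPrime m →
      bsq f m = sSup (e '' {a : A | f (e a) ≤ m}) ∧ OpenElem e (bsq f m) :=
  stmt16_general e hce f hf hfcE
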